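/- The bisectors B₁ = B(p̃₀, G₁·p̃₀) and B₅ = B(p̃₀, G₂²·G₁·p̃₀) are disjoint: there is no z ∈ ℂ³ with ⟨z, z⟩ < 0, |⟨z, p̃₀⟩| = |⟨z, G₁·p̃₀⟩|, and |⟨z, p̃₀⟩| = |⟨z, G₂²·G₁·p̃₀⟩|. -/

import Mathlib

/-!
On the intersection of the two bisectors the three numbers `|⟨z, p₀⟩|`, `|⟨z, G₁p₀⟩|`,
`|⟨z, G₂²G₁p₀⟩|` agree, so `⟨z, z⟩ = ⟨z, z⟩ + |⟨z, G₁p₀⟩|² + |⟨z, G₂²G₁p₀⟩|² - 2|⟨z, p₀⟩|²`.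
The Hermitian form on the right is positive semidefinite: it is a positive combination of
squared moduli of linear forms in `z`. Hence `⟨z, z⟩ ≥ 0`, and `z` is not a negative vector.
-/

noncomputable section

open Matrix

/-- ω = i·√7 -/
def ω : ℂ := Complex.I * Real.sqrt 7

def G₁ : Matrix (Fin 3) (Fin 3) ℂ := !![1, 1, (-1-ω)/2; 0, 1, -1; 0, 0, 1]

def G₃ : Matrix (Fin 3) (Fin 3) ℂ := !![1, 0, 0; -1, 1, 0; (-1+ω)/2, 1, 1]

def G₂ : Matrix (Fin 3) (Fin 3) ℂ := G₃ * G₁⁻¹ * G₃⁻¹ * G₁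

/-- Hermitian form ⟨Z,W⟩ = Z₁·conj(W₃) + Z₂·conj(W₂) + Z₃·conj(W₁). -/
def herm (Z W : Fin 3 → ℂ) : ℂ :=
  Z 0 * (starRingEnd ℂ) (W 2) + Z 1 * (starRingEnd ℂ) (W 1) + Z 2 * (starRingEnd ℂ) (W 0)

def p₀ : Fin 3 → ℂ := ![1, -(3+ω)/4, -1]

open ComplexConjugate

lemma ω_sq : ω ^ 2 = -7 := by
  rw [ω, mul_pow, Complex.I_sq, ← Complex.ofReal_pow, Real.sq_sqrt (by norm_num)]
  push_cast; ring

lemma conj_ω : conj ω = -ω := by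
  rw [ω, map_mul, Complex.conj_I, Complex.conj_ofReal, neg_mul]

lemma G₁_inv : G₁⁻¹ = !![1, -1, (-1 + ω) / 2; 0, 1, 1; 0, 0, 1] := by
  refine inv_eq_right_inv ?_
  rw [G₁, mul_fin_three, one_fin_three]
  simp only [EmbeddingLike.apply_eq_iff_eq, vecCons_inj, and_true]
  and_intros <;> ring

lemma G₃_inv : G₃⁻¹ = !![1, 0, 0; 1, 1, 0; (-1 - ω) / 2, -1, 1] := by
  refine inv_eq_right_inv ?_
  rw [G₃, mul_fin_three, one_fin_three]
  simp only [EmbeddingLike.apply_eq_iff_eq, vecCons_inj, and_true]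
  and_intros <;> ring

lemma G₂_eq : G₂ = !![2, (3 - ω) / 2, -1; (-3 - ω) / 2, -1, 0; -1, 0, 0] := by
  rw [G₂, G₁_inv, G₃_inv, G₃, G₁, mul_fin_three, mul_fin_three, mul_fin_three]
  simp only [EmbeddingLike.apply_eq_iff_eq, vecCons_inj, and_true]
  and_intros <;> grind [ω_sq]

lemma G₁_mulVec_p₀ : G₁ *ᵥ p₀ = ![(3 + ω) / 4, (1 - ω) / 4, -1] := by
  rw [G₁, p₀]
  simp only [cons_mulVec, vec3_dotProduct', empty_mulVec, vecCons_inj, and_true]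
  and_intros <;> ring

lemma G₂_sq_mul_G₁_mulVec_p₀ : (G₂ ^ 2 * G₁) *ᵥ p₀ = ![(9 - ω) / 4, (-5 - ω) / 2, -2] := by
  rw [sq, ← mulVec_mulVec, ← mulVec_mulVec, G₁_mulVec_p₀, G₂_eq]
  simp only [cons_mulVec, vec3_dotProduct', empty_mulVec, vecCons_inj, and_true]
  and_intros <;> grind [ω_sq]

lemma conj_herm (z w : Fin 3 → ℂ) : conj (herm z w) = herm w z := by
  simp only [herm, map_add, map_mul, Complex.conj_conj]
  ring

lemma ofReal_re_herm_self (z : Fin 3 → ℂ) : ((herm z z).re : ℂ) = herm z z :=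
  Complex.conj_eq_iff_re.mp (conj_herm z z)

lemma ofReal_sq_norm_herm (z w : Fin 3 → ℂ) :
    (‖herm z w‖ : ℂ) ^ 2 = herm z w * herm w z := by
  rw [← conj_herm z w, Complex.mul_conj']

/-- The three vectors on the right come from an LDL* diagonalisation of the Gram matrix of the
form on the left. -/
lemma herm_self_re_add_sq_norm_sub_eq_sum_sq (z : Fin 3 → ℂ) :
    (herm z z).re + ‖herm z (G₁ *ᵥ p₀)‖ ^ 2 + ‖herm z ((G₂ ^ 2 * G₁) *ᵥ p₀)‖ ^ 2
        - 2 * ‖herm z p₀‖ ^ 2 =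
      3 * ‖herm z ![-3 / 4 + ω / 12, 13 / 12 + ω / 4, 1]‖ ^ 2
        + 8 / 3 * ‖herm z ![-9 / 16 + ω / 4, 1, 0]‖ ^ 2 + 21 / 32 * ‖herm z ![1, 0, 0]‖ ^ 2 := by
  apply Complex.ofReal_injective
  rw [G₁_mulVec_p₀, G₂_sq_mul_G₁_mulVec_p₀]
  push_cast
  simp only [ofReal_re_herm_self, ofReal_sq_norm_herm]
  simp only [herm, p₀, cons_val_zero, cons_val_one, cons_val_two, head_cons, tail_cons,
    map_add, map_sub, map_neg, map_div₀, map_one, map_zero, map_ofNat, conj_ω]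
  linear_combination z 2 * conj (z 2) / 16 * ω_sq

lemma herm_self_re_nonneg_of_mem_bisectors {z : Fin 3 → ℂ}
    (h₁ : ‖herm z p₀‖ = ‖herm z (G₁ *ᵥ p₀)‖) (h₅ : ‖herm z p₀‖ = ‖herm z ((G₂ ^ 2 * G₁) *ᵥ p₀)‖) :
    0 ≤ (herm z z).re := by
  have h := herm_self_re_add_sq_norm_sub_eq_sum_sq z
  rw [← h₁, ← h₅, add_assoc, add_sub_assoc, ← two_mul, sub_self, add_zero] at h
  rw [h]
  positivity

/-- The bisectors B₁ = B(p₀, G₁ p₀) and B₅ = B(p₀, G₂² G₁ p₀) are disjoint. -/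
theorem stmt14 :
    ¬ ∃ z : Fin 3 → ℂ, (∃ r : ℝ, r < 0 ∧ herm z z = (r : ℂ)) ∧
      ‖herm z p₀‖ = ‖herm z (G₁ *ᵥ p₀)‖ ∧
      ‖herm z p₀‖ = ‖herm z ((G₂ ^ 2 * G₁) *ᵥ p₀)‖ := by
  rintro ⟨z, ⟨r, hr, hzz⟩, h₁, h₅⟩
  have h := herm_self_re_nonneg_of_mem_bisectors h₁ h₅
  rw [hzz, Complex.ofReal_re] at h
  exact hr.not_ge h
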